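/- Define W : (0,1) → ℝ by W(θ) = Σₖ mᵏ·Φ((√(σ² + σₖ²)·Φ⁻¹(c) + σ²μ − σ²θ)/(−σₖ)) − θ. If Σₖ mᵏ/σₖ ≤ √(2π)/σ², then W'(θ) ≤ 0 for all θ ∈ (0,1), and consequently W has a unique zero in (0,1). -/

import Mathlib

/-!
Write `W θ = ∑ₖ mₖ Φ(sₖ θ + tₖ) - θ` with slopes `sₖ = σ² / σₖ > 0`. Its derivative
`∑ₖ mₖ sₖ φ(sₖ θ + tₖ) - 1` is at most `(∑ₖ mₖ sₖ) / √(2π) - 1 ≤ 0` because `φ ≤ 1 / √(2π)`,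
and, since `φ` attains its maximum only at `0`, it is strictly negative except at the single
point where `sₖ θ + tₖ` vanishes for a fixed `k`. Hence `W` is strictly decreasing. As
`0 < Φ < 1` and `∑ₖ mₖ = 1`, we have `W 0 > 0 > W 1`, and the intermediate value theorem
gives the unique zero.
-/

open MeasureTheory ProbabilityTheory Filter

/-- The standard normal density `φ`. -/
noncomputable def stdGaussianPDF (x : ℝ) : ℝ := Real.exp (-x ^ 2 / 2) / Real.sqrt (2 * Real.pi)

/-- The standard normal CDF `Φ`. -/
noncomputable def stdGaussianCDF (x : ℝ) : ℝ := ∫ t in Set.Iic x, stdGaussianPDF t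

/-- The standard normal quantile function `Φ⁻¹`. -/
noncomputable def stdGaussianCDFInv (c : ℝ) : ℝ := Function.invFun stdGaussianCDF c

open Real Set

lemma stdGaussianPDF_eq_gaussianPDFReal : stdGaussianPDF = gaussianPDFReal 0 1 := by
  ext x
  simp [stdGaussianPDF, gaussianPDFReal, div_eq_inv_mul]

lemma continuous_stdGaussianPDF : Continuous stdGaussianPDF := by
  unfold stdGaussianPDF; fun_prop

lemma stdGaussianPDF_pos (x : ℝ) : 0 < stdGaussianPDF x := by
  rw [stdGaussianPDF_eq_gaussianPDFReal]; exact gaussianPDFReal_pos 0 1 x one_ne_zero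

lemma integrable_stdGaussianPDF : Integrable stdGaussianPDF := by
  rw [stdGaussianPDF_eq_gaussianPDFReal]; exact integrable_gaussianPDFReal 0 1

lemma integral_stdGaussianPDF : ∫ x, stdGaussianPDF x = 1 := by
  rw [stdGaussianPDF_eq_gaussianPDFReal]; exact integral_gaussianPDFReal_eq_one 0 one_ne_zero

lemma stdGaussianPDF_le (x : ℝ) : stdGaussianPDF x ≤ (√(2 * π))⁻¹ := by
  rw [stdGaussianPDF, div_eq_mul_inv]
  exact mul_le_of_le_one_left (by positivity) (exp_le_one_iff.2 (by nlinarith [sq_nonneg x]))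

lemma stdGaussianPDF_lt_of_ne_zero {x : ℝ} (hx : x ≠ 0) : stdGaussianPDF x < (√(2 * π))⁻¹ := by
  rw [stdGaussianPDF, div_eq_mul_inv]
  have : 0 < x ^ 2 := by positivity
  exact mul_lt_of_lt_one_left (by positivity) (exp_lt_one_iff.2 (by linarith))

lemma hasDerivAt_stdGaussianCDF (x : ℝ) : HasDerivAt stdGaussianCDF (stdGaussianPDF x) x := by
  have hsplit : stdGaussianCDF = fun y ↦ stdGaussianCDF 0 + ∫ t in (0 : ℝ)..y, stdGaussianPDF t := by
    ext y
    rw [← intervalIntegral.integral_Iic_sub_Iic integrable_stdGaussianPDF.integrableOn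
      integrable_stdGaussianPDF.integrableOn, stdGaussianCDF, stdGaussianCDF, add_sub_cancel]
  rw [hsplit]
  exact (intervalIntegral.integral_hasDerivAt_right integrable_stdGaussianPDF.intervalIntegrable
    continuous_stdGaussianPDF.stronglyMeasurable.stronglyMeasurableAtFilter
    continuous_stdGaussianPDF.continuousAt).const_add _

lemma strictMono_stdGaussianCDF : StrictMono stdGaussianCDF :=
  strictMono_of_hasDerivAt_pos hasDerivAt_stdGaussianCDF stdGaussianPDF_pos

lemma stdGaussianCDF_nonneg (x : ℝ) : 0 ≤ stdGaussianCDF x :=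
  setIntegral_nonneg measurableSet_Iic fun t _ ↦ (stdGaussianPDF_pos t).le

lemma stdGaussianCDF_le_one (x : ℝ) : stdGaussianCDF x ≤ 1 :=
  integral_stdGaussianPDF ▸ setIntegral_le_integral integrable_stdGaussianPDF
    (Eventually.of_forall fun t ↦ (stdGaussianPDF_pos t).le)

lemma stdGaussianCDF_pos (x : ℝ) : 0 < stdGaussianCDF x :=
  (stdGaussianCDF_nonneg (x - 1)).trans_lt (strictMono_stdGaussianCDF (sub_one_lt x))

lemma stdGaussianCDF_lt_one (x : ℝ) : stdGaussianCDF x < 1 :=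
  (strictMono_stdGaussianCDF (lt_add_one x)).trans_le (stdGaussianCDF_le_one (x + 1))

lemma strictAnti_of_hasDerivAt_neg_of_ne {f f' : ℝ → ℝ} (a : ℝ) (hf : ∀ x, HasDerivAt f (f' x) x)
    (hf' : ∀ x, x ≠ a → f' x < 0) : StrictAnti f := by
  have hcont : Continuous f := continuous_iff_continuousAt.2 fun x ↦ (hf x).continuousAt
  have hderiv : ∀ x, x ≠ a → deriv f x < 0 := fun x hx ↦ (hf x).deriv ▸ hf' x hx
  refine StrictAntiOn.Iic_union_Ici (a := a) ?_ ?_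
  · refine strictAntiOn_of_deriv_neg (convex_Iic a) hcont.continuousOn fun x hx ↦ hderiv x ?_
    rw [interior_Iic] at hx; exact hx.ne
  · refine strictAntiOn_of_deriv_neg (convex_Ici a) hcont.continuousOn fun x hx ↦ hderiv x ?_
    rw [interior_Ici] at hx; exact hx.ne'

lemma existsUnique_mem_Ioo_eq_zero_of_strictAnti {f : ℝ → ℝ} {a b : ℝ} (hf : StrictAnti f)
    (hcont : Continuous f) (ha : 0 < f a) (hb : f b < 0) : ∃! x, x ∈ Ioo a b ∧ f x = 0 := by
  have hab : a ≤ b := (hf.lt_iff_gt.1 (hb.trans ha)).le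
  obtain ⟨x, hx, hfx⟩ := intermediate_value_Ioo' hab hcont.continuousOn ⟨hb, ha⟩
  exact ⟨x, ⟨hx, hfx⟩, fun y hy ↦ hf.injective (hy.2.trans hfx.symm)⟩

section Mixture

variable {K : Type*} [Fintype K]

lemma sum_mul_stdGaussianPDF_le (w x : K → ℝ) (hw : ∀ k, 0 ≤ w k) :
    ∑ k, w k * stdGaussianPDF (x k) ≤ (∑ k, w k) * (√(2 * π))⁻¹ := by
  rw [Finset.sum_mul]
  exact Finset.sum_le_sum fun k _ ↦ mul_le_mul_of_nonneg_left (stdGaussianPDF_le _) (hw k)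

lemma sum_mul_stdGaussianPDF_lt (w x : K → ℝ) (hw : ∀ k, 0 < w k) {k₀ : K} (hx : x k₀ ≠ 0) :
    ∑ k, w k * stdGaussianPDF (x k) < (∑ k, w k) * (√(2 * π))⁻¹ := by
  rw [Finset.sum_mul]
  exact Finset.sum_lt_sum (fun k _ ↦ mul_le_mul_of_nonneg_left (stdGaussianPDF_le _) (hw k).le)
    ⟨k₀, Finset.mem_univ _, mul_lt_mul_of_pos_left (stdGaussianPDF_lt_of_ne_zero hx) (hw k₀)⟩

lemma sum_mul_stdGaussianCDF_pos [Nonempty K] (m x : K → ℝ) (hm : ∀ k, 0 < m k) :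
    0 < ∑ k, m k * stdGaussianCDF (x k) :=
  Finset.sum_pos (fun k _ ↦ mul_pos (hm k) (stdGaussianCDF_pos _)) Finset.univ_nonempty

lemma sum_mul_stdGaussianCDF_lt [Nonempty K] (m x : K → ℝ) (hm : ∀ k, 0 < m k) :
    ∑ k, m k * stdGaussianCDF (x k) < ∑ k, m k :=
  Finset.sum_lt_sum_of_nonempty Finset.univ_nonempty fun k _ ↦
    mul_lt_of_lt_one_right (hm k) (stdGaussianCDF_lt_one _)

variable (m s t : K → ℝ)

lemma hasDerivAt_sum_mul_stdGaussianCDF_affine_sub_id (θ : ℝ) :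
    HasDerivAt (fun θ ↦ ∑ k, m k * stdGaussianCDF (s k * θ + t k) - θ)
      (∑ k, m k * s k * stdGaussianPDF (s k * θ + t k) - 1) θ := by
  refine (HasDerivAt.fun_sum fun k _ ↦ ?_).sub (hasDerivAt_id θ)
  have := ((hasDerivAt_stdGaussianCDF _).comp θ
    (((hasDerivAt_id θ).const_mul (s k)).add_const (t k))).const_mul (m k)
  simpa [mul_comm, mul_left_comm, mul_assoc] using this

variable {m s t}

lemma sum_mul_stdGaussianPDF_affine_le_one (hm : ∀ k, 0 ≤ m k) (hs : ∀ k, 0 ≤ s k)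
    (hms : ∑ k, m k * s k ≤ √(2 * π)) (θ : ℝ) :
    ∑ k, m k * s k * stdGaussianPDF (s k * θ + t k) ≤ 1 :=
  (sum_mul_stdGaussianPDF_le _ _ fun k ↦ mul_nonneg (hm k) (hs k)).trans <|
    mul_inv_le_one_of_le₀ hms (by positivity)

lemma sum_mul_stdGaussianPDF_affine_lt_one (hm : ∀ k, 0 < m k) (hs : ∀ k, 0 < s k)
    (hms : ∑ k, m k * s k ≤ √(2 * π)) {θ : ℝ} {k₀ : K} (hθ : s k₀ * θ + t k₀ ≠ 0) :
    ∑ k, m k * s k * stdGaussianPDF (s k * θ + t k) < 1 :=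
  (sum_mul_stdGaussianPDF_lt _ _ (fun k ↦ mul_pos (hm k) (hs k)) hθ).trans_le <|
    mul_inv_le_one_of_le₀ hms (by positivity)

lemma strictAnti_sum_mul_stdGaussianCDF_affine_sub_id [Nonempty K] (hm : ∀ k, 0 < m k)
    (hs : ∀ k, 0 < s k) (hms : ∑ k, m k * s k ≤ √(2 * π)) :
    StrictAnti fun θ ↦ ∑ k, m k * stdGaussianCDF (s k * θ + t k) - θ := by
  obtain ⟨k₀⟩ := ‹Nonempty K›
  refine strictAnti_of_hasDerivAt_neg_of_ne (-t k₀ / s k₀)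
    (hasDerivAt_sum_mul_stdGaussianCDF_affine_sub_id m s t) fun θ hθ ↦ ?_
  have hθ' : s k₀ * θ + t k₀ ≠ 0 := by
    contrapose! hθ
    field_simp [(hs k₀).ne']
    linarith
  linarith [sum_mul_stdGaussianPDF_affine_lt_one hm hs hms hθ']

end Mixture

theorem stmt7_general {K : Type*} [Fintype K] [Nonempty K] (m σk : K → ℝ) (σ μ c : ℝ)
    (hm : ∀ k, 0 < m k) (hsum : ∑ k, m k = 1) (hσ : 0 < σ) (hσk : ∀ k, 0 < σk k)
    (hprec : ∑ k, m k / σk k ≤ Real.sqrt (2 * Real.pi) / σ ^ 2) (W : ℝ → ℝ)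
    (hW : ∀ θ, W θ = (∑ k, m k * stdGaussianCDF
        ((Real.sqrt (σ ^ 2 + σk k ^ 2) * stdGaussianCDFInv c + σ ^ 2 * μ - σ ^ 2 * θ)
          / (-σk k))) - θ) :
    (∀ θ ∈ Set.Ioo (0:ℝ) 1, deriv W θ ≤ 0) ∧
    ∃! θstar, θstar ∈ Set.Ioo (0:ℝ) 1 ∧ W θstar = 0 := by
  set s : K → ℝ := fun k ↦ σ ^ 2 / σk k
  set t : K → ℝ := fun k ↦ -(√(σ ^ 2 + σk k ^ 2) * stdGaussianCDFInv c + σ ^ 2 * μ) / σk k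
  have hWst : W = fun θ ↦ ∑ k, m k * stdGaussianCDF (s k * θ + t k) - θ := by
    ext θ
    rw [hW]
    congr! 4 with k
    simp only [s, t]
    field_simp [(hσk k).ne']
    ring
  have hs : ∀ k, 0 < s k := fun k ↦ div_pos (pow_pos hσ 2) (hσk k)
  have hms : ∑ k, m k * s k ≤ √(2 * π) := by
    calc ∑ k, m k * s k = σ ^ 2 * ∑ k, m k / σk k := by
          rw [Finset.mul_sum]; exact Finset.sum_congr rfl fun k _ ↦ by ring
      _ ≤ √(2 * π) := by
          rwa [← le_div_iff₀' (pow_pos hσ 2)]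
  have hderiv := hasDerivAt_sum_mul_stdGaussianCDF_affine_sub_id m s t
  have hanti := strictAnti_sum_mul_stdGaussianCDF_affine_sub_id (t := t) hm hs hms
  rw [hWst]
  refine ⟨fun θ _ ↦ ?_, existsUnique_mem_Ioo_eq_zero_of_strictAnti hanti ?_ ?_ ?_⟩
  · rw [(hderiv θ).deriv]
    linarith [sum_mul_stdGaussianPDF_affine_le_one (t := t) (fun k ↦ (hm k).le)
      (fun k ↦ (hs k).le) hms θ]
  · exact continuous_iff_continuousAt.2 fun θ ↦ (hderiv θ).continuousAt
  · simpa using sum_mul_stdGaussianCDF_pos m (fun k ↦ s k * 0 + t k) hm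
  · simpa [hsum] using sum_mul_stdGaussianCDF_lt m (fun k ↦ s k * 1 + t k) hm

/-- Under the precision condition `Σₖ mᵏ/σₖ ≤ √(2π)/σ²`, the fixed-point map `W` has
nonpositive derivative on `(0,1)` and a unique zero there. -/
theorem stmt7 {K : Type*} [Fintype K] [Nonempty K] (m σk : K → ℝ) (σ μ c : ℝ)
    (hm : ∀ k, 0 < m k) (hsum : ∑ k, m k = 1) (hσ : 0 < σ) (hσk : ∀ k, 0 < σk k)
    (hc : c ∈ Set.Ioo (0:ℝ) 1)
    (hprec : ∑ k, m k / σk k ≤ Real.sqrt (2 * Real.pi) / σ ^ 2) (W : ℝ → ℝ)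
    (hW : ∀ θ, W θ = (∑ k, m k * stdGaussianCDF
        ((Real.sqrt (σ ^ 2 + σk k ^ 2) * stdGaussianCDFInv c + σ ^ 2 * μ - σ ^ 2 * θ)
          / (-σk k))) - θ) :
    (∀ θ ∈ Set.Ioo (0:ℝ) 1, deriv W θ ≤ 0) ∧
    ∃! θstar, θstar ∈ Set.Ioo (0:ℝ) 1 ∧ W θstar = 0 :=
  stmt7_general m σk σ μ c hm hsum hσ hσk hprec W hW
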